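/- arXiv:2507.22427 — 2 statements merged into one kernel-verified Lean document; each statement's English description precedes it below -/
import Mathlib

section
/- Let T be a bounded operator on a reproducing kernel Hilbert space and p ≥ 2. Then ber(T)^p ≤ (1/2) ber(|T|^p + |T*|^p). -/
open scoped InnerProductSpace
open ContinuousLinearMap

variable {H : Type*} [NormedAddCommGroup H] [InnerProductSpace ℂ H] [CompleteSpace H]
variable {Ω : Type*}

/-- The modulus `|T| = (T*T)^{1/2}` of a bounded operator. -/
noncomputable def oabs (T : H →L[ℂ] H) : H →L[ℂ] H := CFC.sqrt (star T * T)

/-- The Berezin radius with respect to the family of normalized kernels `khat`. -/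
noncomputable def ber (khat : Ω → H) (S : H →L[ℂ] H) : ℝ :=
  ⨆ l : Ω, ‖⟪S (khat l), khat l⟫_ℂ‖

/-! For a unit vector `x`, `|⟨T x, x⟩|^p ≤ ‖T x‖^p = ⟨T*T x, x⟩^(p/2) ≤ ⟨|T|^p x, x⟩`, the last step
being McCarthy's inequality: the tangent line of the convex function `t ↦ t^(p/2)` at
`⟨T*T x, x⟩` lies below it on the spectrum, hence below it as operators by the functional
calculus. The same bound holds for `T*`, whose diagonal values are conjugate to those of `T`;
adding the two bounds at each normalized kernel gives the claim. -/

open scoped NNReal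

lemma Real.tangent_le_rpow {l t q : ℝ} (hl : 0 < l) (ht : 0 ≤ t) (hq : 1 ≤ q) :
    (1 - q) * l ^ q + q * l ^ (q - 1) * t ≤ t ^ q := by
  have hlq : 0 < l ^ q := Real.rpow_pos_of_pos hl q
  have hll : l ^ (q - 1) * l = l ^ q := by
    rw [← Real.rpow_add_one hl.ne', sub_add_cancel]
  -- Bernoulli's inequality at `t / l - 1`, rescaled by `l ^ q`.
  have bernoulli := one_add_mul_self_le_rpow_one_add (s := t / l - 1)
    (by linarith [div_nonneg ht hl.le]) hq
  rw [add_sub_cancel, Real.div_rpow ht hl.le, le_div_iff₀ hlq] at bernoulli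
  calc (1 - q) * l ^ q + q * l ^ (q - 1) * t = (1 + q * (t / l - 1)) * l ^ q := by
        rw [← hll]; field_simp; ring
    _ ≤ t ^ q := bernoulli

lemma CFC.affine_le_rpow {A : Type*} [CStarAlgebra A] [PartialOrder A] [StarOrderedRing A]
    {a : A} (ha : 0 ≤ a) {c d q : ℝ} (hq : 0 < q) (h : ∀ t : ℝ, 0 ≤ t → c + d * t ≤ t ^ q) :
    c • (1 : A) + d • a ≤ CFC.rpow a q := by
  have h_rpow : CFC.rpow a q = cfc (fun t : ℝ => ((t.toNNReal ^ q : ℝ≥0) : ℝ)) a :=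
    cfc_nnreal_eq_real _ _ ha
  have h_affine : c • (1 : A) + d • a = cfc (fun t : ℝ => c + d * t) a := by
    rw [cfc_add a (fun _ => c) (fun t => d * t), cfc_const c a, cfc_const_mul_id d a,
      Algebra.algebraMap_eq_smul_one]
  rw [h_rpow, h_affine, cfc_le_iff (fun t => c + d * t) (fun t => ((t.toNNReal ^ q : ℝ≥0) : ℝ))
    a (by fun_prop) (NNReal.continuous_coe.comp ((NNReal.continuous_rpow_const hq.le).comp
      continuous_real_toNNReal)).continuousOn (.of_nonneg ha)]
  intro t ht
  have ht0 : 0 ≤ t := spectrum_nonneg_of_nonneg ha ht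
  rw [NNReal.coe_rpow, Real.coe_toNNReal t ht0]
  exact h t ht0

section InnerProductSpace

variable {E : Type*} [NormedAddCommGroup E] [InnerProductSpace ℂ E]

lemma ContinuousLinearMap.re_inner_le_re_inner_of_le {S T : E →L[ℂ] E} (h : S ≤ T) (x : E) :
    RCLike.re ⟪S x, x⟫_ℂ ≤ RCLike.re ⟪T x, x⟫_ℂ := by
  simpa [inner_sub_left] using h.re_inner_nonneg_left x

lemma ContinuousLinearMap.re_inner_affine_apply (A : E →L[ℂ] E) (c d : ℝ) (x : E) :
    RCLike.re ⟪(c • (1 : E →L[ℂ] E) + d • A) x, x⟫_ℂ =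
      c * ‖x‖ ^ 2 + d * RCLike.re ⟪A x, x⟫_ℂ := by
  simp [← Complex.ofReal_pow]

lemma ber_nonneg (khat : Ω → E) (S : E →L[ℂ] E) : 0 ≤ ber khat S :=
  Real.iSup_nonneg fun _ => norm_nonneg _

lemma norm_inner_le_ber {khat : Ω → E} (hk : ∀ l, ‖khat l‖ = 1) (S : E →L[ℂ] E) (l : Ω) :
    ‖⟪S (khat l), khat l⟫_ℂ‖ ≤ ber khat S := by
  refine le_ciSup (f := fun l => ‖⟪S (khat l), khat l⟫_ℂ‖) ⟨‖S‖, ?_⟩ l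
  rintro - ⟨l', rfl⟩
  simpa [hk l'] using (norm_inner_le_norm (𝕜 := ℂ) (S (khat l')) (khat l')).trans
    (mul_le_mul_of_nonneg_right (S.le_opNorm (khat l')) (norm_nonneg _))

lemma ber_rpow_le {khat : Ω → E} {S : E →L[ℂ] E} {p c : ℝ} (hp : 0 < p) (hc : 0 ≤ c)
    (h : ∀ l, ‖⟪S (khat l), khat l⟫_ℂ‖ ^ p ≤ c) :
    ber khat S ^ p ≤ c := by
  rw [← Real.le_rpow_inv_iff_of_pos (ber_nonneg khat S) hc hp]
  exact Real.iSup_le (fun l => (Real.le_rpow_inv_iff_of_pos (norm_nonneg _) hc hp).2 (h l))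
    (by positivity)

end InnerProductSpace

namespace ContinuousLinearMap

lemma re_inner_star_mul_self_apply (T : H →L[ℂ] H) (x : H) :
    RCLike.re ⟪(star T * T) x, x⟫_ℂ = ‖T x‖ ^ 2 := by
  change RCLike.re ⟪star T (T x), x⟫_ℂ = _
  rw [star_eq_adjoint, adjoint_inner_left, inner_self_eq_norm_sq]

/-- McCarthy's inequality. -/
lemma re_inner_rpow_le_re_inner_rpow {A : H →L[ℂ] H} (hA : 0 ≤ A) {q : ℝ} (hq : 1 ≤ q)
    {x : H} (hx : ‖x‖ = 1) :
    (RCLike.re ⟪A x, x⟫_ℂ) ^ q ≤ RCLike.re ⟪CFC.rpow A q x, x⟫_ℂ := by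
  have hA' : A.IsPositive := (nonneg_iff_isPositive A).mp hA
  rcases (hA'.re_inner_nonneg_left x).eq_or_lt with hl | hl
  · rw [← hl, Real.zero_rpow (by linarith)]
    exact ((nonneg_iff_isPositive _).mp CFC.rpow_nonneg).re_inner_nonneg_left x
  -- Apply the tangent line of `t ↦ t ^ q` at `⟪A x, x⟫` to `A` and evaluate at `x`.
  have h_tangent := re_inner_le_re_inner_of_le (CFC.affine_le_rpow hA (by linarith)
    fun t ht => Real.tangent_le_rpow hl ht hq) x
  have h_pow : RCLike.re ⟪A x, x⟫_ℂ ^ (q - 1) * RCLike.re ⟪A x, x⟫_ℂ =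
      RCLike.re ⟪A x, x⟫_ℂ ^ q := by
    rw [← Real.rpow_add_one hl.ne', sub_add_cancel]
  rw [re_inner_affine_apply, hx, one_pow, mul_one, mul_assoc q, h_pow] at h_tangent
  linarith

end ContinuousLinearMap

lemma rpow_oabs {T : H →L[ℂ] H} {p : ℝ} (hp : 0 ≤ p) :
    CFC.rpow (oabs T) p = CFC.rpow (star T * T) (p / 2) := by
  rw [oabs]
  simpa [Real.coe_toNNReal p hp] using
    CFC.rpow_sqrt_nnreal (a := star T * T) (x := p.toNNReal) (star_mul_self_nonneg T)

lemma norm_inner_rpow_le_re_inner_rpow_oabs (T : H →L[ℂ] H) {p : ℝ} (hp : 2 ≤ p) {x : H}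
    (hx : ‖x‖ = 1) :
    ‖⟪T x, x⟫_ℂ‖ ^ p ≤ RCLike.re ⟪CFC.rpow (oabs T) p x, x⟫_ℂ := by
  have h_cs : ‖⟪T x, x⟫_ℂ‖ ≤ ‖T x‖ := by
    simpa [hx] using norm_inner_le_norm (𝕜 := ℂ) (T x) x
  calc ‖⟪T x, x⟫_ℂ‖ ^ p ≤ ‖T x‖ ^ p := by gcongr
    _ = (RCLike.re ⟪(star T * T) x, x⟫_ℂ) ^ (p / 2) := by
      rw [re_inner_star_mul_self_apply, ← Real.rpow_natCast, ← Real.rpow_mul (norm_nonneg _)]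
      congr 1
      push_cast
      ring
    _ ≤ RCLike.re ⟪CFC.rpow (oabs T) p x, x⟫_ℂ := by
      rw [rpow_oabs (by linarith)]
      exact re_inner_rpow_le_re_inner_rpow (star_mul_self_nonneg T) (by linarith) hx

theorem stmt_9_general (khat : Ω → H) (hk : ∀ l : Ω, ‖khat l‖ = 1)
    (T : H →L[ℂ] H) (p : ℝ) (hp : 2 ≤ p) :
    (ber khat T) ^ p ≤
      (1 / 2) * ber khat (CFC.rpow (oabs T) p + CFC.rpow (oabs (star T)) p) := by
  set S := CFC.rpow (oabs T) p + CFC.rpow (oabs (star T)) p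
  refine ber_rpow_le (by linarith) (by linarith [ber_nonneg khat S]) fun l => ?_
  have h_star : ‖⟪star T (khat l), khat l⟫_ℂ‖ = ‖⟪T (khat l), khat l⟫_ℂ‖ := by
    rw [star_eq_adjoint, adjoint_inner_left, norm_inner_symm]
  have h_T := norm_inner_rpow_le_re_inner_rpow_oabs T hp (hk l)
  have h_star_T := norm_inner_rpow_le_re_inner_rpow_oabs (star T) hp (hk l)
  have h_S : RCLike.re ⟪S (khat l), khat l⟫_ℂ ≤ ber khat S :=
    (RCLike.re_le_norm _).trans (norm_inner_le_ber hk S l)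
  rw [h_star] at h_star_T
  simp only [S, add_apply, inner_add_left, map_add] at h_S
  linarith

/-- For `p ≥ 2`, `ber(T)^p ≤ (1/2) ber(|T|^p + |T*|^p)`. -/
theorem stmt_9 [Nonempty Ω] (khat : Ω → H) (hk : ∀ l : Ω, ‖khat l‖ = 1)
    (T : H →L[ℂ] H) (p : ℝ) (hp : 2 ≤ p) :
    (ber khat T) ^ p ≤
      (1 / 2) * ber khat (CFC.rpow (oabs T) p + CFC.rpow (oabs (star T)) p) :=
  stmt_9_general khat hk T p hp
end

section
/- Let T be a bounded operator on a reproducing kernel Hilbert space and p ≥ 1. Then ber(|T|² + |T*|²)^p ≤ 2^{p-1} ber(|T|^{2p} + |T*|^{2p}). -/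
open scoped InnerProductSpace
open ContinuousLinearMap

variable {H : Type*} [NormedAddCommGroup H] [InnerProductSpace ℂ H] [CompleteSpace H]
variable {Ω : Type*}

open scoped NNReal

/-- Tangent line inequality for `rpow`, `p ≥ 1`. -/
private lemma tangent_rpow {s x p : ℝ} (hs : 0 < s) (hx : 0 ≤ x) (hp : 1 ≤ p) :
    s ^ p + p * s ^ (p - 1) * (x - s) ≤ x ^ p := by
  have hb := one_add_mul_self_le_rpow_one_add (s := x / s - 1)
    (by have := div_nonneg hx hs.le; linarith) hp
  have h1 : (1 : ℝ) + (x / s - 1) = x / s := by ring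
  rw [h1] at hb
  have hsp : s ^ (p - 1) * s = s ^ p := by
    rw [← Real.rpow_add_one hs.ne' (p - 1)]; ring_nf
  have hsppos : (0:ℝ) < s ^ p := Real.rpow_pos_of_pos hs p
  have hmul := mul_le_mul_of_nonneg_right hb hsppos.le
  have hds : (x / s) ^ p * s ^ p = x ^ p := by
    rw [← Real.mul_rpow (div_nonneg hx hs.le) hs.le, div_mul_cancel₀ _ hs.ne']
  calc s ^ p + p * s ^ (p - 1) * (x - s)
      = (1 + p * (x / s - 1)) * s ^ p := by
        rw [← hsp]; field_simp
    _ ≤ (x / s) ^ p * s ^ p := hmul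
    _ = x ^ p := hds

/-- McCarthy-type inequality: `⟨Ak,k⟩^p ≤ ⟨A^p k,k⟩` for positive `A`, unit `k`, `p ≥ 1`. -/
private lemma mccarthy (A : H →L[ℂ] H) (hA : (0 : H →L[ℂ] H) ≤ A) (k : H) (hk : ‖k‖ = 1)
    (p : ℝ) (hp : 1 ≤ p) :
    (RCLike.re ⟪A k, k⟫_ℂ) ^ p ≤ RCLike.re ⟪CFC.rpow A p k, k⟫_ℂ := by
  have hA' : A.IsPositive := by
    simpa using (ContinuousLinearMap.le_def 0 A).mp hA
  set s := RCLike.re ⟪A k, k⟫_ℂ with hs_def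
  have hs0 : 0 ≤ s := hA'.re_inner_nonneg_left k
  have hrpow_pos : (0 : H →L[ℂ] H) ≤ CFC.rpow A p := CFC.rpow_nonneg
  rcases hs0.eq_or_lt with h0 | hs
  · rw [← h0, Real.zero_rpow (by linarith)]
    have : (CFC.rpow A p).IsPositive := by
      simpa using (ContinuousLinearMap.le_def 0 _).mp hrpow_pos
    exact this.re_inner_nonneg_left k
  · set c : ℝ := s ^ p - p * s ^ (p - 1) * s with hc_def
    set m : ℝ := p * s ^ (p - 1) with hm_def
    have hsa : IsSelfAdjoint A := hA'.isSelfAdjoint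
    have hfcont : Continuous (fun x : ℝ => ((x.toNNReal ^ p : ℝ≥0) : ℝ)) := by
      have h1 : Continuous (fun y : ℝ≥0 => y ^ p) :=
        NNReal.continuous_rpow_const (le_trans zero_le_one hp)
      exact NNReal.continuous_coe.comp (h1.comp continuous_real_toNNReal)
    have hrpow_eq : CFC.rpow A p = cfc (fun x : ℝ => ((x.toNNReal ^ p : ℝ≥0) : ℝ)) A := by
      have h1 : CFC.rpow A p = cfc (fun x : ℝ≥0 => x ^ p) A := rfl
      rw [h1, cfc_nnreal_eq_real _ A hA]
    have key : cfc (fun x : ℝ => c + m * x) A ≤ CFC.rpow A p := by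
      rw [hrpow_eq]
      refine cfc_mono (fun x hx => ?_) (by fun_prop) hfcont.continuousOn
      have hx0 : 0 ≤ x := spectrum_nonneg_of_nonneg hA hx
      have hxp : ((x.toNNReal ^ p : ℝ≥0) : ℝ) = x ^ p := by
        rw [NNReal.coe_rpow, Real.coe_toNNReal x hx0]
      rw [hxp]
      calc c + m * x = s ^ p + p * s ^ (p - 1) * (x - s) := by rw [hc_def, hm_def]; ring
        _ ≤ x ^ p := tangent_rpow hs hx0 hp
    have haff : cfc (fun x : ℝ => c + m * x) A
        = algebraMap ℝ (H →L[ℂ] H) c + m • A := by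
      have h1 : (fun x : ℝ => c + m * x)
          = fun x => (fun _ : ℝ => c) x + (fun x : ℝ => m * x) x := rfl
      rw [h1, cfc_add A _ _, cfc_const c A, cfc_const_mul_id m A]
    have hinner : RCLike.re ⟪(algebraMap ℝ (H →L[ℂ] H) c + m • A) k, k⟫_ℂ = c + m * s := by
      rw [hs_def]
      simp only [ContinuousLinearMap.add_apply, ContinuousLinearMap.smul_apply,
        Algebra.algebraMap_eq_smul_one, ContinuousLinearMap.one_apply, inner_add_left]
      rw [RCLike.real_smul_eq_coe_smul (K := ℂ) c k, RCLike.real_smul_eq_coe_smul (K := ℂ) m (A k)]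
      simp only [inner_smul_left, RCLike.conj_ofReal, map_add]
      have hkk : ⟪k, k⟫_ℂ = ((‖k‖ : ℂ)) ^ 2 := inner_self_eq_norm_sq_to_K k
      rw [hkk, hk]
      simp [RCLike.mul_re]
    have hmono := ((ContinuousLinearMap.le_def _ _).mp key).re_inner_nonneg_left k
    rw [ContinuousLinearMap.sub_apply, inner_sub_left, map_sub] at hmono
    have hfin : s ^ p = c + m * s := by rw [hc_def, hm_def]; ring
    rw [hfin, ← hinner, ← haff]
    linarith

/-- The key pointwise estimate `(‖Tk‖²)^p ≤ ⟨|T|^{2p} k, k⟩` for a unit vector `k`. -/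
private lemma norm_sq_rpow_le (T : H →L[ℂ] H) (k : H) (hk : ‖k‖ = 1) (p : ℝ) (hp : 1 ≤ p) :
    ((‖T k‖ ^ 2 : ℝ)) ^ p ≤ RCLike.re ⟪CFC.rpow (oabs T) (2 * p) k, k⟫_ℂ := by
  have hTT : (0 : H →L[ℂ] H) ≤ star T * T := star_mul_self_nonneg T
  have hp0 : (0:ℝ) ≤ 2 * p := by linarith
  have hkey : CFC.rpow (oabs T) (2 * p) = CFC.rpow (star T * T) p := by
    have hx : ((⟨2 * p, hp0⟩ : ℝ≥0) : ℝ) = 2 * p := rfl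
    have h := CFC.rpow_sqrt_nnreal (a := star T * T) (x := ⟨2 * p, hp0⟩) hTT
    have h3 : CFC.rpow (star T * T) ((2 * p) / 2) = CFC.rpow (star T * T) p := by norm_num
    rw [oabs]
    exact h.trans h3
  have hre : RCLike.re ⟪(star T * T) k, k⟫_ℂ = ‖T k‖ ^ 2 := by
    have h1 : (star T * T) k = adjoint T (T k) := by
      rw [ContinuousLinearMap.star_eq_adjoint]; rfl
    rw [h1, adjoint_inner_left, inner_self_eq_norm_sq_to_K]
    norm_cast
  rw [hkey, ← hre]
  exact mccarthy (star T * T) hTT k hk p hp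

/-- Real version of `(x+y)^p ≤ 2^(p-1) (x^p + y^p)`. -/
private lemma real_add_rpow_le {x y p : ℝ} (hx : 0 ≤ x) (hy : 0 ≤ y) (hp : 1 ≤ p) :
    (x + y) ^ p ≤ 2 ^ (p - 1) * (x ^ p + y ^ p) := by
  have h := NNReal.rpow_add_le_mul_rpow_add_rpow (⟨x, hx⟩ : ℝ≥0) (⟨y, hy⟩ : ℝ≥0) hp
  exact_mod_cast h

/-- For `p ≥ 1`, `ber(|T|² + |T*|²)^p ≤ 2^{p-1} ber(|T|^{2p} + |T*|^{2p})`. -/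
theorem stmt_12 [Nonempty Ω] (khat : Ω → H) (hk : ∀ l : Ω, ‖khat l‖ = 1)
    (T : H →L[ℂ] H) (p : ℝ) (hp : 1 ≤ p) :
    (ber khat (adjoint T ∘L T + T ∘L adjoint T)) ^ p ≤
      (2 : ℝ) ^ (p - 1) *
        ber khat (CFC.rpow (oabs T) (2 * p) + CFC.rpow (oabs (star T)) (2 * p)) := by
  set S₁ : H →L[ℂ] H := adjoint T ∘L T + T ∘L adjoint T with hS₁
  set S₂ : H →L[ℂ] H := CFC.rpow (oabs T) (2 * p) + CFC.rpow (oabs (star T)) (2 * p) with hS₂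
  have hp0 : (0 : ℝ) < p := lt_of_lt_of_le zero_lt_one hp
  have hbdd : ∀ S : H →L[ℂ] H, BddAbove (Set.range fun l => ‖⟪S (khat l), khat l⟫_ℂ‖) := by
    intro S
    refine ⟨‖S‖, ?_⟩
    rintro _ ⟨l, rfl⟩
    calc ‖⟪S (khat l), khat l⟫_ℂ‖ ≤ ‖S (khat l)‖ * ‖khat l‖ := norm_inner_le_norm _ _
      _ ≤ ‖S‖ * ‖khat l‖ * ‖khat l‖ :=
        mul_le_mul_of_nonneg_right (S.le_opNorm _) (norm_nonneg _)
      _ = ‖S‖ := by rw [hk l]; ring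
  have hb₂0 : 0 ≤ ber khat S₂ := Real.iSup_nonneg fun l => norm_nonneg _
  have h2pow : (0:ℝ) ≤ (2:ℝ) ^ (p - 1) := by positivity
  have pointwise : ∀ l : Ω, ‖⟪S₁ (khat l), khat l⟫_ℂ‖ ^ p ≤ 2 ^ (p - 1) * ber khat S₂ := by
    intro l
    set k := khat l with hkdef
    have hk1 : ‖k‖ = 1 := hk l
    set x : ℝ := ‖T k‖ ^ 2 with hxdef
    set y : ℝ := ‖adjoint T k‖ ^ 2 with hydef
    have hx0 : 0 ≤ x := sq_nonneg _
    have hy0 : 0 ≤ y := sq_nonneg _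
    have step1 : ‖⟪S₁ k, k⟫_ℂ‖ = x + y := by
      have h2 : ⟪T (adjoint T k), k⟫_ℂ = ⟪adjoint T k, adjoint T k⟫_ℂ := by
        rw [← adjoint_inner_right]
      have h1 : ⟪S₁ k, k⟫_ℂ = (((x + y : ℝ)) : ℂ) := by
        rw [hS₁]
        simp only [ContinuousLinearMap.add_apply, ContinuousLinearMap.coe_comp',
          Function.comp_apply, inner_add_left]
        rw [adjoint_inner_left, h2, inner_self_eq_norm_sq_to_K, inner_self_eq_norm_sq_to_K]
        push_cast [hxdef, hydef]
        norm_cast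
      rw [h1, Complex.norm_real, Real.norm_of_nonneg (by positivity)]
    have step3 : x ^ p ≤ RCLike.re ⟪CFC.rpow (oabs T) (2 * p) k, k⟫_ℂ :=
      norm_sq_rpow_le T k hk1 p hp
    have step4 : y ^ p ≤ RCLike.re ⟪CFC.rpow (oabs (star T)) (2 * p) k, k⟫_ℂ := by
      have h := norm_sq_rpow_le (star T) k hk1 p hp
      rwa [ContinuousLinearMap.star_eq_adjoint] at h
    have step5 : RCLike.re ⟪CFC.rpow (oabs T) (2 * p) k, k⟫_ℂ
        + RCLike.re ⟪CFC.rpow (oabs (star T)) (2 * p) k, k⟫_ℂ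
        = RCLike.re ⟪S₂ k, k⟫_ℂ := by
      rw [hS₂]
      simp [ContinuousLinearMap.add_apply, inner_add_left]
    have step6 : RCLike.re ⟪S₂ k, k⟫_ℂ ≤ ber khat S₂ := by
      refine le_trans (RCLike.re_le_norm _) ?_
      rw [ber]
      exact le_ciSup (hbdd S₂) l
    calc ‖⟪S₁ k, k⟫_ℂ‖ ^ p = (x + y) ^ p := by rw [step1]
      _ ≤ 2 ^ (p - 1) * (x ^ p + y ^ p) := real_add_rpow_le hx0 hy0 hp
      _ ≤ 2 ^ (p - 1) * ber khat S₂ := by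
          refine mul_le_mul_of_nonneg_left ?_ h2pow
          linarith
  have hC0 : 0 ≤ 2 ^ (p - 1) * ber khat S₂ := mul_nonneg h2pow hb₂0
  have hsup : ber khat S₁ ≤ (2 ^ (p - 1) * ber khat S₂) ^ (1 / p) := by
    rw [ber]
    refine ciSup_le fun l => ?_
    have heq : ‖⟪S₁ (khat l), khat l⟫_ℂ‖
        = (‖⟪S₁ (khat l), khat l⟫_ℂ‖ ^ p) ^ (1 / p) := by
      rw [← Real.rpow_mul (norm_nonneg _), mul_one_div_cancel hp0.ne', Real.rpow_one]
    rw [heq]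
    exact Real.rpow_le_rpow (by positivity) (pointwise l) (by positivity)
  have hb₁0 : 0 ≤ ber khat S₁ := Real.iSup_nonneg fun l => norm_nonneg _
  calc (ber khat S₁) ^ p ≤ ((2 ^ (p - 1) * ber khat S₂) ^ (1 / p)) ^ p :=
        Real.rpow_le_rpow hb₁0 hsup hp0.le
    _ = 2 ^ (p - 1) * ber khat S₂ := by
        rw [← Real.rpow_mul hC0, one_div_mul_cancel hp0.ne', Real.rpow_one]
end
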